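/- Let 𝔥 be an abelian Lie algebra with nondegenerate symmetric form ⟨·,·⟩ and consider operators α(n) for α ∈ 𝔥, n ∈ ℤ, satisfying the Heisenberg relations [α(m), β(n)] = m⟨α,β⟩δ_{m+n,0}·c with c central acting as 1. Then on the symmetric algebra S(𝔥̂_ℤ⁻) = S(⨁_{n<0} 𝔥 ⊗ tⁿ), with α(−n) (n>0) acting by multiplication and α(n) (n>0) acting as the derivation determined by α(n)·(β ⊗ t^{−m}) = n⟨α,β⟩δ_{n,m}, and α(0) = 0, these operators satisfy the Heisenberg relations, and S(𝔥̂_ℤ⁻) is an irreducible module for the Heisenberg algebra. -/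

import Mathlib

/-
Annihilation operators `α(n)`, `n > 0`, are derivations sending every generator to a constant,
so any two of them commute, and `[α(n), β(-m)]` is multiplication by the constant
`α(n)(β ⊗ t^{-m}) = n⟨α,β⟩δ_{n,m}`; creation operators are multiplications and commute as well.
For irreducibility, nondegeneracy of `⟨·,·⟩` produces (through the dual basis) an `α` with
`α(n) = ∂/∂X_{(i,n)}`. In characteristic zero, differentiating a nonzero element of an invariant
subspace in a variable of a top-degree monomial lowers the total degree without killing it, so the
subspace contains a nonzero constant, hence `1`; the creation operators then generate every
polynomial from `1`.
-/

open MvPolynomial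

@[elab_as_elim]
theorem Int.casesOnPNat {motive : ℤ → Prop} (n : ℤ) (zero : motive 0)
    (pos : ∀ k : ℕ+, motive k) (neg : ∀ k : ℕ+, motive (-k)) : motive n := by
  obtain ⟨k, rfl | rfl⟩ := Int.eq_nat_or_neg n
  all_goals rcases Nat.eq_zero_or_pos k with rfl | hk
  · exact zero
  · exact pos ⟨k, hk⟩
  · exact zero
  · exact neg ⟨k, hk⟩

theorem Derivation.toLinearMap_mul_mulLeft_sub {R A : Type*} [CommSemiring R] [CommRing A]
    [Algebra R A] (D : Derivation R A A) (a : A) :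
    (D : Module.End R A) * LinearMap.mulLeft R a - LinearMap.mulLeft R a * D =
      LinearMap.mulLeft R (D a) := by
  ext p
  simp [D.leibniz, mul_comm]

namespace MvPolynomial

variable {σ : Type*}

theorem totalDegree_pderiv_lt {R : Type*} [CommSemiring R] {p : MvPolynomial σ R}
    (hp : 0 < p.totalDegree) (v : σ) : (pderiv v p).totalDegree < p.totalDegree := by
  classical
  refine (Finset.sup_lt_iff hp).mpr fun m hm => ?_
  have hcoeff : coeff (m + Finsupp.single v 1) p ≠ 0 := by
    intro h
    simp [coeff_pderiv, h] at hm
  have := le_totalDegree (mem_support_iff.mpr hcoeff)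
  have h1 : ((m + Finsupp.single v 1).sum fun _ e => e) = (m.sum fun _ e => e) + 1 := by
    rw [Finsupp.sum_add_index' (fun _ => rfl) (fun _ _ _ => rfl), Finsupp.sum_single_index rfl]
  omega

theorem eq_top_of_one_mem_of_forall_X_mul_mem {R : Type*} [CommSemiring R]
    {S : Submodule R (MvPolynomial σ R)} (h1 : 1 ∈ S) (hX : ∀ v, ∀ p ∈ S, X v * p ∈ S) :
    S = ⊤ := by
  rw [eq_top_iff]
  rintro p -
  induction p using MvPolynomial.induction_on with
  | C a => simpa [smul_eq_C_mul] using S.smul_mem a h1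
  | add p q hp hq => exact S.add_mem hp hq
  | mul_X p v hp => simpa [mul_comm] using hX v p hp

variable {K : Type*} [Field K] [CharZero K]

theorem exists_pderiv_ne_zero {p : MvPolynomial σ K} (hp : 0 < p.totalDegree) :
    ∃ v, pderiv v p ≠ 0 := by
  classical
  obtain ⟨m, hm, hdeg⟩ := Finset.exists_mem_eq_sup p.support
    (Finset.nonempty_iff_ne_empty.mpr fun h => by simp_all [totalDegree])
    fun s => s.sum fun _ e => e
  obtain ⟨v, hv⟩ : ∃ v, m v ≠ 0 := by
    by_contra! h
    have : m = 0 := Finsupp.ext h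
    simp [totalDegree, hdeg, this] at hp
  have hle : Finsupp.single v 1 ≤ m := Finsupp.single_le_iff.mpr (Nat.one_le_iff_ne_zero.mpr hv)
  refine ⟨v, fun h0 => ?_⟩
  have := congr_arg (coeff (m - Finsupp.single v 1)) h0
  rw [coeff_pderiv, tsub_add_cancel_of_le hle, coeff_zero] at this
  exact (mul_eq_zero.mp this).elim (mem_support_iff.mp hm) (Nat.cast_add_one_ne_zero _)

theorem one_mem_of_forall_pderiv_mem {S : Submodule K (MvPolynomial σ K)}
    (hS : ∀ v, ∀ p ∈ S, pderiv v p ∈ S) (hne : S ≠ ⊥) : 1 ∈ S := by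
  obtain ⟨p, hpS, hp⟩ := (Submodule.ne_bot_iff S).mp hne
  induction h : p.totalDegree using Nat.strong_induction_on generalizing p with
  | _ n ih =>
  rcases Nat.eq_zero_or_pos n with rfl | hpos
  · rw [totalDegree_eq_zero_iff_eq_C] at h
    have hc : coeff 0 p ≠ 0 := by intro hc; rw [h, hc, C_0] at hp; exact hp rfl
    rw [h] at hpS
    simpa [smul_eq_C_mul, ← C_mul, hc] using S.smul_mem (coeff 0 p)⁻¹ hpS
  · obtain ⟨v, hv⟩ := exists_pderiv_ne_zero (h ▸ hpos)
    exact ih _ (h ▸ totalDegree_pderiv_lt (h ▸ hpos) v) _ (hS v p hpS) hv rfl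

end MvPolynomial

namespace HeisenbergFock

theorem commutator_eq_ite_symm {R M : Type*} [CommRing R] [AddCommGroup M] [Module R M]
    {f g : Module.End R M} {m n : ℤ} {b : R}
    (h : f * g - g * f = if m + n = 0 then ((m : R) * b) • 1 else 0) :
    g * f - f * g = if n + m = 0 then ((n : R) * b) • 1 else 0 := by
  rw [← neg_sub, h, add_comm n m]
  split_ifs with hmn
  · rw [show (n : R) = -m by rw [show n = -m by omega]; push_cast; rfl, neg_mul, neg_smul]
  · exact neg_zero

variable {K ι : Type*} [Field K]

section Creation
variable [Fintype ι]

noncomputable def creation (α : ι → K) (n : ℕ+) : MvPolynomial (ι × ℕ+) K :=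
  ∑ i, α i • X (i, n)

theorem creation_add (α β : ι → K) (n : ℕ+) :
    creation (α + β) n = creation α n + creation β n := by
  simp [creation, add_smul, Finset.sum_add_distrib]

theorem creation_smul (c : K) (α : ι → K) (n : ℕ+) :
    creation (c • α) n = c • creation α n := by
  simp [creation, Finset.smul_sum, mul_smul]

theorem creation_single [DecidableEq ι] (i : ι) (n : ℕ+) :
    creation (Pi.single i (1 : K)) n = X (i, n) := by
  simp [creation, Pi.single_apply]

end Creation

section Annihilation
variable [DecidableEq ι] (B : (ι → K) →ₗ[K] (ι → K) →ₗ[K] K)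

noncomputable def annihilation (α : ι → K) (n : ℕ+) :
    Derivation K (MvPolynomial (ι × ℕ+) K) (MvPolynomial (ι × ℕ+) K) :=
  mkDerivation K fun v => if n = v.2 then C ((n : K) * B α (Pi.single v.1 1)) else 0

@[simp]
theorem annihilation_X (α : ι → K) (n : ℕ+) (i : ι) (m : ℕ+) :
    annihilation B α n (X (i, m)) = if n = m then C ((n : K) * B α (Pi.single i 1)) else 0 :=
  mkDerivation_X K _ _

theorem annihilation_add (α β : ι → K) (n : ℕ+) :
    annihilation B (α + β) n = annihilation B α n + annihilation B β n :=
  derivation_ext fun ⟨i, m⟩ => by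
    simp only [Derivation.add_apply, annihilation_X, map_add, LinearMap.add_apply]
    split_ifs <;> simp [mul_add]

theorem annihilation_smul (c : K) (α : ι → K) (n : ℕ+) :
    annihilation B (c • α) n = c • annihilation B α n :=
  derivation_ext fun ⟨i, m⟩ => by
    simp only [Derivation.smul_apply, annihilation_X, map_smul, LinearMap.smul_apply]
    split_ifs <;> simp [smul_eq_C_mul, mul_left_comm]

theorem annihilation_creation [Fintype ι] (α β : ι → K) (m n : ℕ+) :
    annihilation B α m (creation β n) = if m = n then C ((m : K) * B α β) else 0 := by
  have hβ : B α β = ∑ i, β i * B α (Pi.single i 1) := by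
    conv_lhs => rw [← Finset.univ_sum_single β, map_sum]
    refine Finset.sum_congr rfl fun i _ => ?_
    rw [← smul_eq_mul, ← map_smul, ← Pi.single_smul', smul_eq_mul, mul_one]
  split_ifs with h
  · simp [creation, h, hβ, smul_eq_C_mul, Finset.mul_sum, mul_left_comm]
  · simp [creation, h]

theorem annihilation_commute (α β : ι → K) (m n : ℕ+) :
    Commute (annihilation B α m : Module.End K (MvPolynomial (ι × ℕ+) K))
      (annihilation B β n) := by
  have h : ⁅annihilation B α m, annihilation B β n⁆ = 0 := derivation_ext fun ⟨i, k⟩ => by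
    simp only [Derivation.commutator_apply, annihilation_X]
    split_ifs <;> simp [← algebraMap_eq]
  refine LinearMap.ext fun p => sub_eq_zero.mp ?_
  simpa [Derivation.commutator_apply] using congr($h p)

end Annihilation

section Operators
variable [Fintype ι] [DecidableEq ι] (B : (ι → K) →ₗ[K] (ι → K) →ₗ[K] K)

noncomputable def heisenbergOp (α : ι → K) (n : ℤ) : Module.End K (MvPolynomial (ι × ℕ+) K) :=
  if 0 < n then annihilation B α n.toNat.toPNat'
  else if n < 0 then LinearMap.mulLeft K (creation α (-n).toNat.toPNat')
  else 0

theorem heisenbergOp_pnat (α : ι → K) (n : ℕ+) :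
    heisenbergOp B α n = annihilation B α n := by
  simp [heisenbergOp]

theorem heisenbergOp_neg_pnat (α : ι → K) (n : ℕ+) :
    heisenbergOp B α (-n) = LinearMap.mulLeft K (creation α n) := by
  simp [heisenbergOp]

theorem heisenbergOp_zero (α : ι → K) : heisenbergOp B α 0 = 0 := by
  simp [heisenbergOp]

theorem heisenbergOp_add (α β : ι → K) (n : ℤ) :
    heisenbergOp B (α + β) n = heisenbergOp B α n + heisenbergOp B β n := by
  induction n using Int.casesOnPNat with
  | zero => simp [heisenbergOp_zero]
  | pos n => simp [heisenbergOp_pnat, annihilation_add]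
  | neg n => exact LinearMap.ext fun p => by simp [heisenbergOp_neg_pnat, creation_add, add_mul]

theorem heisenbergOp_smul (c : K) (α : ι → K) (n : ℤ) :
    heisenbergOp B (c • α) n = c • heisenbergOp B α n := by
  induction n using Int.casesOnPNat with
  | zero => simp [heisenbergOp_zero]
  | pos n => simp [heisenbergOp_pnat, annihilation_smul]
  | neg n => exact LinearMap.ext fun p => by simp [heisenbergOp_neg_pnat, creation_smul]

theorem heisenbergOp_commutator_pnat_neg (α β : ι → K) (k l : ℕ+) :
    heisenbergOp B α k * heisenbergOp B β (-l) - heisenbergOp B β (-l) * heisenbergOp B α k =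
      if (k : ℤ) + -l = 0 then ((k : ℤ) * B α β : K) • 1 else 0 := by
  rw [heisenbergOp_pnat, heisenbergOp_neg_pnat, Derivation.toLinearMap_mul_mulLeft_sub,
    annihilation_creation]
  have hkl : (k : ℤ) + -l = 0 ↔ k = l := by rw [add_neg_eq_zero]; exact_mod_cast Iff.rfl
  refine LinearMap.ext fun p => ?_
  split_ifs <;> simp_all [smul_eq_C_mul, mul_assoc]

theorem heisenbergOp_commutator (hsymm : ∀ α β, B α β = B β α) (α β : ι → K) (m n : ℤ) :
    heisenbergOp B α m * heisenbergOp B β n - heisenbergOp B β n * heisenbergOp B α m =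
      if m + n = 0 then ((m : K) * B α β) • 1 else 0 := by
  induction m using Int.casesOnPNat with
  | zero => simp [heisenbergOp_zero]
  | pos k =>
    induction n using Int.casesOnPNat with
    | zero => simp [heisenbergOp_zero]
    | pos l =>
      rw [if_neg (by have := k.pos; have := l.pos; omega), heisenbergOp_pnat, heisenbergOp_pnat,
        (annihilation_commute B α β k l).eq, sub_self]
    | neg l => exact heisenbergOp_commutator_pnat_neg B α β k l
  | neg k =>
    induction n using Int.casesOnPNat with
    | zero => simp [heisenbergOp_zero]
    | pos l =>
      rw [hsymm]
      exact commutator_eq_ite_symm (heisenbergOp_commutator_pnat_neg B β α l k)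
    | neg l =>
      rw [if_neg (by have := k.pos; have := l.pos; omega), heisenbergOp_neg_pnat,
        heisenbergOp_neg_pnat, sub_eq_zero]
      exact LinearMap.ext fun p => mul_left_comm _ _ _

theorem exists_annihilation_eq_pderiv [CharZero K] (hB : B.SeparatingLeft) (i : ι) (n : ℕ+) :
    ∃ α, annihilation B α n = pderiv (i, n) := by
  have hB' : LinearMap.BilinForm.Nondegenerate B := .ofSeparatingLeft hB
  refine ⟨(n : K)⁻¹ • LinearMap.BilinForm.dualBasis B hB' (Pi.basisFun K ι) i,
    derivation_ext fun ⟨j, m⟩ => ?_⟩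
  have hdual := LinearMap.BilinForm.apply_dualBasis_left hB' (Pi.basisFun K ι) i j
  rw [Pi.basisFun_apply] at hdual
  simp [hdual, pderiv_X, Pi.single_apply, Prod.ext_iff, ite_and, @eq_comm _ m n]
  split_ifs <;> rfl

theorem heisenbergOp_irreducible [CharZero K] (hB : B.SeparatingLeft)
    (S : Submodule K (MvPolynomial (ι × ℕ+) K))
    (hS : ∀ α (n : ℤ), ∀ p ∈ S, heisenbergOp B α n p ∈ S) (hne : S ≠ ⊥) : S = ⊤ := by
  refine eq_top_of_one_mem_of_forall_X_mul_mem
    (one_mem_of_forall_pderiv_mem (fun ⟨i, n⟩ p hp => ?_) hne) fun ⟨i, n⟩ p hp => ?_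
  · obtain ⟨α, hα⟩ := exists_annihilation_eq_pderiv B hB i n
    simpa [heisenbergOp_pnat, hα] using hS α n p hp
  · simpa [heisenbergOp_neg_pnat, creation_single] using hS (Pi.single i 1) (-n) p hp

end Operators

end HeisenbergFock

open HeisenbergFock

/-- Heisenberg operators on the symmetric algebra `S(𝔥̂_ℤ⁻)`, realized as the
polynomial algebra on generators `X_(i,n)` (`e_i ⊗ t^{-n}`, `n > 0`) where
`𝔥 = ℂ^d` carries a nondegenerate symmetric bilinear form `B`.  There exist
operators `α(n)` (`α ∈ 𝔥`, `n ∈ ℤ`), linear in `α`, with `α(-n)` (`n > 0`) acting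
by multiplication, `α(n)` (`n > 0`) acting as the derivation determined by
`α(n)·(β ⊗ t^{-m}) = n⟨α,β⟩δ_{n,m}`, and `α(0) = 0`; they satisfy the Heisenberg
relations `[α(m), β(n)] = m⟨α,β⟩δ_{m+n,0}·1`, and the module is irreducible. -/
theorem stmt_11 (d : ℕ)
    (B : (Fin d → ℂ) →ₗ[ℂ] (Fin d → ℂ) →ₗ[ℂ] ℂ)
    (hsymm : ∀ α β, B α β = B β α)
    (hnondeg : ∀ α, (∀ β, B α β = 0) → α = 0) :
    ∃ A : (Fin d → ℂ) → ℤ → Module.End ℂ (MvPolynomial (Fin d × ℕ+) ℂ),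
      (∀ α β n, A (α + β) n = A α n + A β n) ∧
      (∀ (c : ℂ) α n, A (c • α) n = c • A α n) ∧
      -- creation operators act by multiplication
      (∀ α (n : ℕ+) p, A α (-(n : ℤ)) p =
          (∑ i, α i • MvPolynomial.X (i, n)) * p) ∧
      -- annihilation operators are derivations determined by the pairing
      (∀ α (n : ℕ+) p q, A α (n : ℤ) (p * q)
          = A α (n : ℤ) p * q + p * A α (n : ℤ) q) ∧
      (∀ α (n : ℕ+) i (m : ℕ+), A α (n : ℤ) (MvPolynomial.X (i, m))
          = if n = m then MvPolynomial.C ((n : ℂ) * B α (Pi.single i 1)) else 0) ∧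
      (∀ α, A α 0 = 0) ∧
      -- the Heisenberg relations
      (∀ α β (m n : ℤ), A α m * A β n - A β n * A α m
          = if m + n = 0 then ((m : ℂ) * B α β) •
              (1 : Module.End ℂ (MvPolynomial (Fin d × ℕ+) ℂ)) else 0) ∧
      -- irreducibility
      (∀ S : Submodule ℂ (MvPolynomial (Fin d × ℕ+) ℂ),
        (∀ α (n : ℤ), ∀ p ∈ S, A α n p ∈ S) → S ≠ ⊥ → S = ⊤) := by
  refine ⟨heisenbergOp B, heisenbergOp_add B, heisenbergOp_smul B, fun α n p => ?_,
    fun α n p q => ?_, fun α n i m => ?_, heisenbergOp_zero B, heisenbergOp_commutator B hsymm,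
    heisenbergOp_irreducible B hnondeg⟩
  · rw [heisenbergOp_neg_pnat]
    rfl
  · simp [heisenbergOp_pnat, Derivation.leibniz, mul_comm, add_comm]
  · rw [heisenbergOp_pnat]
    exact annihilation_X B α n i m
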